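/- Let n ≥ 2, let v_0, …, v_{l'} be a symmetric filter of length l' (0 < l' ≤ ⌊(n−1)/4⌋), and let w = v ∗ v be its autoconvolution, a symmetric filter of length l = 2l'. For i = 1,…,n set λ_i^P = w_0 + 2∑_{j=1}^{l} w_j cos(2j(i−1)π/n). Then λ_1^P = 1, and 0 ≤ λ_i^P < 1 for every i ∈ {2,…,n}. Consequently every eigenvalue of the circulant matrix W^P built from w lies in [0,1]. -/

import Mathlib

/-!
With `x = 2π(i-1)/n`, the cosine sum of `w = v ∗ v` is the square of that of `v`:
`∑_d w_d cos(dx) = (∑_k v_k cos(kx))²`, because convolution becomes a product and the sine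
part vanishes by symmetry. The cosine sum of `v` is `1` at `x = 0` and lies strictly between
`-1` and `1` otherwise, since `v_0, v_1 > 0`.

Since `2l' < n`, wrapping around modulo `n` commutes with the convolution, so `W^P = V V` for
the periodic matrix `V` built from `v`. As `V` is symmetric and row-stochastic, `W^P` is
positive semidefinite and row-stochastic, and Gershgorin's theorem bounds its spectrum by `1`.
-/

open Finset Matrix

theorem sum_Icc_neg_eq_add_sum_Icc_one {M : Type*} [AddCommMonoid M] (f : ℤ → M) (L : ℕ) :
    ∑ k ∈ Icc (-(L : ℤ)) L, f k = f 0 + ∑ j ∈ Icc 1 L, (f j + f (-j)) := by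
  induction L with
  | zero => simp
  | succ L ih =>
    have hIcc : Icc (-((L + 1 : ℕ) : ℤ)) ((L + 1 : ℕ) : ℤ) =
        insert ((L + 1 : ℕ) : ℤ) (insert (-((L + 1 : ℕ) : ℤ)) (Icc (-(L : ℤ)) L)) := by
      ext a; simp only [mem_insert, mem_Icc]; omega
    rw [hIcc, sum_insert (by simp only [mem_insert, mem_Icc]; omega),
      sum_insert (by simp only [mem_Icc]; omega), ih, sum_Icc_succ_top (by omega)]
    abel

theorem sum_Icc_neg_natAbs {R : Type*} [NonAssocSemiring R] (g : ℕ → R) (L : ℕ) :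
    ∑ k ∈ Icc (-(L : ℤ)) L, g k.natAbs = g 0 + 2 * ∑ j ∈ Icc 1 L, g j := by
  simp [sum_Icc_neg_eq_add_sum_Icc_one, mul_sum, two_mul]

theorem sum_conv_mul {R : Type*} [CommSemiring R] {f g h : ℤ → R} {s t u : Finset ℤ}
    (hg : ∀ b ∉ t, g b = 0) (hu : ∀ a ∈ s, ∀ b ∈ t, a + b ∈ u) :
    ∑ d ∈ u, (∑ a ∈ s, f a * g (d - a)) * h d = ∑ a ∈ s, ∑ b ∈ t, f a * g b * h (a + b) := by
  simp_rw [sum_mul]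
  rw [sum_comm]
  refine sum_congr rfl fun a ha => ?_
  have hshift : ∑ b ∈ t, f a * g b * h (a + b) =
      ∑ d ∈ t.map (addLeftEmbedding a), f a * g (d - a) * h d := by
    simp [sum_map]
  rw [hshift]
  refine (sum_subset (fun d hd => ?_) fun d _ hd => ?_).symm
  · obtain ⟨b, hb, rfl⟩ := mem_map.1 hd
    exact hu a ha b hb
  · rw [hg, mul_zero, zero_mul]
    exact fun hb => hd (mem_map.2 ⟨d - a, hb, by simp⟩)

theorem natAbs_autoconv_eq_sum {R : Type*} [CommSemiring R] [TopologicalSpace R] {v w : ℕ → R}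
    {l : ℕ} (hv : ∀ k, l < k → v k = 0)
    (hw : ∀ j : ℕ, w j = ∑' k : ℤ, v k.natAbs * v ((j : ℤ) - k).natAbs) (d : ℤ) :
    w d.natAbs = ∑ a ∈ Icc (-(l : ℤ)) l, v a.natAbs * v (d - a).natAbs := by
  have heven : w d.natAbs = ∑' k : ℤ, v k.natAbs * v (d - k).natAbs := by
    rcases Int.natAbs_eq d with h | h
    · rw [hw, ← h]
    · rw [hw, ← (Equiv.neg ℤ).tsum_eq]
      congr! 3 with k
      · simp
      · rw [Equiv.neg_apply, ← Int.natAbs_neg]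
        congr 2
        omega
  rw [heven, tsum_eq_sum]
  intro k hk
  rw [hv k.natAbs (by simp only [mem_Icc] at hk; omega), zero_mul]

theorem autoconv_cosine_sum {v w : ℕ → ℝ} {l : ℕ} (hv : ∀ k, l < k → v k = 0)
    (hw : ∀ j : ℕ, w j = ∑' k : ℤ, v k.natAbs * v ((j : ℤ) - k).natAbs) (x : ℝ) :
    w 0 + 2 * ∑ j ∈ Icc 1 (2 * l), w j * Real.cos (j * x) =
      (v 0 + 2 * ∑ j ∈ Icc 1 l, v j * Real.cos (j * x)) ^ 2 := by
  set s := Icc (-(l : ℤ)) l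
  have hcos_natAbs (d : ℤ) : Real.cos (d.natAbs * x) = Real.cos (d * x) := by
    rw [Nat.cast_natAbs, Int.cast_abs]
    rcases abs_choice (d : ℝ) with h | h <;> simp [h]
  have hcos : ∑ a ∈ s, v a.natAbs * Real.cos (a * x) =
      v 0 + 2 * ∑ j ∈ Icc 1 l, v j * Real.cos (j * x) := by
    have := sum_Icc_neg_natAbs (fun j => v j * Real.cos (j * x)) l
    simp only [hcos_natAbs, Nat.cast_zero, zero_mul, Real.cos_zero, mul_one] at this
    exact this
  have hsin : ∑ a ∈ s, v a.natAbs * Real.sin (a * x) = 0 := by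
    simp [s, sum_Icc_neg_eq_add_sum_Icc_one]
  calc w 0 + 2 * ∑ j ∈ Icc 1 (2 * l), w j * Real.cos (j * x)
      = ∑ d ∈ Icc (-((2 * l : ℕ) : ℤ)) (2 * l : ℕ),
          (∑ a ∈ s, v a.natAbs * v (d - a).natAbs) * Real.cos (d * x) := by
        have := sum_Icc_neg_natAbs (fun j => w j * Real.cos (j * x)) (2 * l)
        simp only [hcos_natAbs, natAbs_autoconv_eq_sum hv hw, Nat.cast_zero, zero_mul,
          Real.cos_zero, mul_one] at this
        exact this.symm
    _ = ∑ a ∈ s, ∑ b ∈ s, v a.natAbs * v b.natAbs * Real.cos ((a + b : ℤ) * x) :=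
        sum_conv_mul (fun b hb => hv _ (by simp only [s, mem_Icc] at hb; omega))
          fun a ha b hb => by simp only [s, mem_Icc] at ha hb ⊢; omega
    _ = (∑ a ∈ s, v a.natAbs * Real.cos (a * x)) ^ 2 -
          (∑ a ∈ s, v a.natAbs * Real.sin (a * x)) ^ 2 := by
        simp only [sq, sum_mul_sum, ← sum_sub_distrib, Int.cast_add, add_mul, Real.cos_add]
        congr! 2
        ring
    _ = (v 0 + 2 * ∑ j ∈ Icc 1 l, v j * Real.cos (j * x)) ^ 2 := by
      rw [hsin, hcos]
      ring

theorem abs_cosine_sum_lt_one {v : ℕ → ℝ} {l : ℕ} (hl : 0 < l) (hv : ∀ j ≤ l, 0 < v j)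
    (hsum : v 0 + 2 * ∑ j ∈ Icc 1 l, v j = 1) {x : ℝ} (hx : Real.cos x < 1) :
    |v 0 + 2 * ∑ j ∈ Icc 1 l, v j * Real.cos (j * x)| < 1 := by
  have hupper : ∑ j ∈ Icc 1 l, v j * Real.cos (j * x) < ∑ j ∈ Icc 1 l, v j := by
    refine sum_lt_sum (fun j hj => ?_) ⟨1, by simp; omega, ?_⟩
    · nlinarith [hv j (mem_Icc.1 hj).2, Real.cos_le_one (j * x)]
    · simpa using mul_lt_mul_of_pos_left hx (hv 1 hl)
  have hlower : -∑ j ∈ Icc 1 l, v j ≤ ∑ j ∈ Icc 1 l, v j * Real.cos (j * x) := by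
    rw [← sum_neg_distrib]
    refine sum_le_sum fun j hj => ?_
    nlinarith [hv j (mem_Icc.1 hj).2, Real.neg_one_le_cos (j * x)]
  have hv0 := hv 0 (Nat.zero_le l)
  rw [abs_lt]
  constructor <;> linarith

theorem cos_two_pi_mul_div_lt_one {n i : ℕ} (hi : 0 < i) (hin : i < n) :
    Real.cos (2 * Real.pi * i / n) < 1 := by
  have hn : (0 : ℝ) < n := by exact_mod_cast hi.trans hin
  have hpos : 0 < 2 * Real.pi * i / n := by positivity
  have hlt : 2 * Real.pi * i / n < 2 * Real.pi := by
    rw [div_lt_iff₀ hn]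
    have : (i : ℝ) < n := by exact_mod_cast hin
    nlinarith [Real.pi_pos]
  refine (Real.cos_le_one _).lt_of_ne fun h => hpos.ne' ?_
  exact (Real.cos_eq_one_iff_of_lt_of_lt (by linarith [Real.pi_pos]) hlt).1 h

def periodicMatrix {R : Type*} [Add R] (n : ℕ) (g : ℕ → R) : Matrix (Fin n) (Fin n) R :=
  of fun i j => g ((i : ℤ) - j).natAbs + g (n - ((i : ℤ) - j).natAbs)

theorem periodicMatrix_transpose {R : Type*} [Add R] {n : ℕ} (g : ℕ → R) :
    (periodicMatrix n g)ᵀ = periodicMatrix n g := by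
  ext i j
  simp only [transpose_apply, periodicMatrix, of_apply]
  rw [← Int.natAbs_neg, neg_sub]

theorem periodicMatrix_eq_circulant {R : Type*} [AddCommMonoid R] {n : ℕ} [NeZero n]
    (g : ℕ → R) : periodicMatrix n g = circulant fun k : Fin n => g k + g (n - k) := by
  ext i j
  have hi := i.isLt
  rw [circulant_apply, Fin.val_sub, periodicMatrix, of_apply]
  rcases le_or_gt (j : ℕ) i with h | h
  · have hmod : (n - j + i) % n = i - j := by
      rw [show n - j + i = (i - j) + n by omega, Nat.add_mod_right, Nat.mod_eq_of_lt (by omega)]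
    rw [hmod, show ((i : ℤ) - j).natAbs = i - j by omega]
  · rw [Nat.mod_eq_of_lt (by omega), show ((i : ℤ) - j).natAbs = j - i by omega,
      show n - (n - j + i) = j - i by omega, show n - (j - i) = n - j + i by omega, add_comm]

section Periodize

-- The ring structure supplies the cast `ℤ → Fin n`, reduction modulo `n`.
open Fin.CommRing

def periodize {R : Type*} [AddCommMonoid R] (n : ℕ) [NeZero n] (u : Finset ℤ) (f : ℤ → R)
    (k : Fin n) : R :=
  ∑ d ∈ u with ((d : ℤ) : Fin n) = k, f d

variable {R : Type*} {n : ℕ} [NeZero n]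

theorem sum_periodize [AddCommMonoid R] (u : Finset ℤ) (f : ℤ → R) :
    ∑ k, periodize n u f k = ∑ d ∈ u, f d :=
  sum_fiberwise u _ f

theorem periodize_of_subset [AddCommMonoid R] {s u : Finset ℤ} {f : ℤ → R} (hsu : s ⊆ u)
    (hf : ∀ d ∈ u, d ∉ s → f d = 0) : periodize n u f = periodize n s f := by
  ext k
  refine (sum_subset (filter_subset_filter _ hsu) fun d hd hds => hf d ?_ ?_).symm
  · exact (mem_filter.1 hd).1
  · exact fun hs => hds (mem_filter.2 ⟨hs, (mem_filter.1 hd).2⟩)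

theorem periodize_Ico_natAbs [AddCommMonoid R] (g : ℕ → R) (k : Fin n) :
    periodize n (Ico (-(n : ℤ)) n) (fun d => g d.natAbs) k = g k + g (n - k) := by
  have hk := k.isLt
  have hfilter : {d ∈ Ico (-(n : ℤ)) n | ((d : ℤ) : Fin n) = k} = {(k : ℤ) - n, (k : ℤ)} := by
    ext d
    have hcast : ((d : ℤ) : Fin n) = k ↔ (n : ℤ) ∣ k - d := by
      rw [← Int.modEq_iff_dvd, ← CharP.intCast_eq_intCast (Fin n) n]
      simp
    simp only [mem_filter, mem_Ico, hcast, mem_insert, mem_singleton]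
    constructor
    · rintro ⟨hd, c, hc⟩
      have : 0 ≤ c := by nlinarith
      have : c ≤ 1 := by nlinarith
      interval_cases c <;> omega
    · rintro (rfl | rfl)
      · exact ⟨by omega, 1, by ring⟩
      · exact ⟨by omega, 0, by ring⟩
  rw [periodize, hfilter, sum_pair (by omega), add_comm]
  congr 2; omega

theorem circulant_periodize_mul [CommSemiring R] {f g : ℤ → R} {s t u : Finset ℤ}
    (hg : ∀ b ∉ t, g b = 0) (hu : ∀ a ∈ s, ∀ b ∈ t, a + b ∈ u) :
    circulant (periodize n s f) * circulant (periodize n t g) =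
      circulant (periodize n u fun d => ∑ a ∈ s, f a * g (d - a)) := by
  rw [circulant_mul]
  congr 1
  ext i
  let δ : ℤ → R := fun d => if ((d : ℤ) : Fin n) = i then 1 else 0
  calc (circulant (periodize n s f) *ᵥ periodize n t g) i
      = ∑ a ∈ s, ∑ b ∈ t, f a * g b * δ (a + b) := by
        simp only [mulVec, dotProduct, circulant_apply, periodize, sum_filter, sum_mul_sum]
        rw [sum_comm]
        refine sum_congr rfl fun a _ => ?_
        rw [sum_comm]
        refine sum_congr rfl fun b _ => ?_
        simp only [δ, Int.cast_add, ← eq_sub_iff_add_eq, mul_ite, ite_mul, mul_one, mul_zero,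
          zero_mul]
        rw [sum_ite_eq, if_pos (mem_univ _)]
    _ = ∑ d ∈ u, (∑ a ∈ s, f a * g (d - a)) * δ d := (sum_conv_mul hg hu).symm
    _ = periodize n u (fun d => ∑ a ∈ s, f a * g (d - a)) i := by
        simp [periodize, δ, sum_filter]

end Periodize

theorem periodicMatrix_autoconv {R : Type*} [CommSemiring R] [TopologicalSpace R] {n l : ℕ}
    {v w : ℕ → R} (hv : ∀ k, l < k → v k = 0) (hln : 2 * l < n)
    (hw : ∀ j : ℕ, w j = ∑' k : ℤ, v k.natAbs * v ((j : ℤ) - k).natAbs) :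
    periodicMatrix n w = periodicMatrix n v * periodicMatrix n v := by
  have : NeZero n := ⟨by omega⟩
  set s := Icc (-(l : ℤ)) l
  have hvs : ∀ b ∉ s, v b.natAbs = 0 := fun b hb => hv _ (by simp only [s, mem_Icc] at hb; omega)
  have hV : periodicMatrix n v = circulant (periodize n s fun d => v d.natAbs) := by
    rw [periodicMatrix_eq_circulant, ← periodize_of_subset (u := Ico (-(n : ℤ)) n)
      (fun d hd => by simp only [s, mem_Icc, mem_Ico] at hd ⊢; omega) fun d _ hd => hvs d hd]
    exact congrArg circulant (funext fun k => (periodize_Ico_natAbs v k).symm)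
  rw [hV, circulant_periodize_mul hvs (u := Ico (-(n : ℤ)) n)
    fun a ha b hb => by simp only [s, mem_Icc, mem_Ico] at ha hb ⊢; omega,
    periodicMatrix_eq_circulant]
  refine congrArg circulant (funext fun k => ?_)
  rw [← periodize_Ico_natAbs]
  exact congrArg (periodize n _ · k) (funext (natAbs_autoconv_eq_sum hv hw))

theorem periodicMatrix_mem_rowStochastic {n l : ℕ} {v : ℕ → ℝ} (hv0 : ∀ j, 0 ≤ v j)
    (hv : ∀ k, l < k → v k = 0) (hln : l < n) (hsum : v 0 + 2 * ∑ j ∈ Icc 1 l, v j = 1) :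
    periodicMatrix n v ∈ rowStochastic ℝ (Fin n) := by
  have : NeZero n := ⟨by omega⟩
  refine mem_rowStochastic_iff_sum.2 ⟨fun i j => add_nonneg (hv0 _) (hv0 _), fun i => ?_⟩
  rw [periodicMatrix_eq_circulant]
  calc ∑ j, circulant (fun k : Fin n => v k + v (n - k)) i j
      = ∑ k : Fin n, (v k + v (n - k)) := by
        simp only [circulant_apply]
        exact Equiv.sum_comp (Equiv.subLeft i) fun k : Fin n => v k + v (n - k)
    _ = ∑ d ∈ Ico (-(n : ℤ)) n, v d.natAbs := by
        simp only [← periodize_Ico_natAbs, sum_periodize]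
    _ = ∑ d ∈ Icc (-(l : ℤ)) l, v d.natAbs := by
        refine (sum_subset (fun d hd => ?_) fun d _ hd => hv _ ?_).symm
        · simp only [mem_Icc, mem_Ico] at hd ⊢; omega
        · simp only [mem_Icc] at hd; omega
    _ = 1 := by rw [sum_Icc_neg_natAbs, hsum]

section Spectrum

open scoped ComplexOrder

variable {ι : Type*} [Fintype ι]

theorem posSemidef_map_ofReal_transpose_mul_self (V : Matrix ι ι ℝ) :
    ((Vᵀ * V).map ((↑) : ℝ → ℂ)).PosSemidef := by
  have : (Vᵀ * V).map ((↑) : ℝ → ℂ) = (V.map (↑))ᴴ * V.map (↑) := by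
    rw [← conjTranspose_map _ fun x => (Complex.conj_ofReal x).symm,
      conjTranspose_eq_transpose_of_trivial]
    exact Matrix.map_mul (f := Complex.ofRealHom)
  rw [this]
  exact posSemidef_conjTranspose_mul_self _

theorem norm_le_one_of_mem_spectrum_map_ofReal [DecidableEq ι] {M : Matrix ι ι ℝ}
    (hM : M ∈ rowStochastic ℝ ι) {μ : ℂ} (hμ : μ ∈ spectrum ℂ (M.map ((↑) : ℝ → ℂ))) : ‖μ‖ ≤ 1 := by
  rw [← spectrum_toLin', ← Module.End.hasEigenvalue_iff_mem_spectrum] at hμ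
  obtain ⟨k, hk⟩ := eigenvalue_mem_ball hμ
  have hnorm (j : ι) : ‖(M.map ((↑) : ℝ → ℂ)) k j‖ = M k j := by
    rw [map_apply, Complex.norm_real, Real.norm_of_nonneg (nonneg_of_mem_rowStochastic hM)]
  have hrow : ∑ j ∈ univ.erase k, M k j = 1 - M k k := by
    rw [← sum_row_of_mem_rowStochastic hM k, ← add_sum_erase _ _ (mem_univ k),
      add_sub_cancel_left]
  rw [Metric.mem_closedBall, dist_eq_norm] at hk
  simp only [hnorm, hrow] at hk
  calc ‖μ‖ ≤ ‖(M.map ((↑) : ℝ → ℂ)) k k‖ + ‖μ - (M.map ((↑) : ℝ → ℂ)) k k‖ :=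
        norm_le_norm_add_norm_sub' _ _
    _ ≤ M k k + (1 - M k k) := by rw [hnorm]; gcongr
    _ = 1 := by ring

theorem mem_spectrum_map_ofReal_mul_self [DecidableEq ι] {V : Matrix ι ι ℝ} (hV : Vᵀ = V)
    (hVs : V ∈ rowStochastic ℝ ι) {μ : ℂ} (hμ : μ ∈ spectrum ℂ ((V * V).map ((↑) : ℝ → ℂ))) :
    μ.im = 0 ∧ 0 ≤ μ.re ∧ μ.re ≤ 1 := by
  have hpsd := posSemidef_map_ofReal_transpose_mul_self V
  rw [hV] at hpsd
  obtain ⟨hre, him⟩ :=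
    Complex.nonneg_iff.1 ((posSemidef_iff_isHermitian_and_spectrum_nonneg.1 hpsd).2 hμ)
  exact ⟨him.symm, hre, (Complex.re_le_norm μ).trans
    (norm_le_one_of_mem_spectrum_map_ofReal (mul_mem hVs hVs) hμ)⟩

end Spectrum

theorem stmt_10_general (n l' : ℕ) (v : ℕ → ℝ)
    (hl' : 0 < l') (hl'n : l' ≤ (n - 1) / 4)
    (hpos : ∀ j, j ≤ l' → 0 < v j)
    (hzero : ∀ k, l' < k → v k = 0)
    (hsum : v 0 + 2 * ∑ j ∈ Finset.Icc 1 l', v j = 1)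
    (w : ℕ → ℝ)
    (hw : ∀ j : ℕ, w j = ∑' k : ℤ, v k.natAbs * v ((j : ℤ) - k).natAbs)
    (lam : Fin n → ℝ)
    (hlam : ∀ i : Fin n, lam i = w 0 + 2 * ∑ j ∈ Finset.Icc 1 (2 * l'),
      w j * Real.cos (2 * (j : ℝ) * (i.val : ℝ) * Real.pi / (n : ℝ)))
    (W : Matrix (Fin n) (Fin n) ℝ)
    (hW : ∀ i j : Fin n, W i j =
      w ((i.val : ℤ) - (j.val : ℤ)).natAbs + w (n - ((i.val : ℤ) - (j.val : ℤ)).natAbs)) :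
    (∀ i : Fin n, i.val = 0 → lam i = 1) ∧
    (∀ i : Fin n, 1 ≤ i.val → 0 ≤ lam i ∧ lam i < 1) ∧
    (∀ μ : ℂ, μ ∈ spectrum ℂ (W.map (fun x : ℝ => (x : ℂ))) →
      μ.im = 0 ∧ 0 ≤ μ.re ∧ μ.re ≤ 1) := by
  have hln : 2 * l' < n := by omega
  have hlam_sq (i : Fin n) :
      lam i = (v 0 + 2 * ∑ j ∈ Icc 1 l', v j * Real.cos (j * (2 * Real.pi * i / n))) ^ 2 := by
    rw [hlam, ← autoconv_cosine_sum hzero hw]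
    congr! 5 with j
    ring
  have hWV : W = periodicMatrix n v * periodicMatrix n v := by
    rw [← periodicMatrix_autoconv hzero hln hw]
    exact ext hW
  refine ⟨fun i hi => ?_, fun i hi => ?_, fun μ hμ => ?_⟩
  · simp [hlam_sq, hi, hsum]
  · have hcos := cos_two_pi_mul_div_lt_one hi i.isLt
    rw [hlam_sq]
    exact ⟨sq_nonneg _, (sq_lt_one_iff_abs_lt_one _).2 (abs_cosine_sum_lt_one hl' hpos hsum hcos)⟩
  · have hv0 (j : ℕ) : 0 ≤ v j := by
      rcases le_or_gt j l' with hj | hj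
      · exact (hpos j hj).le
      · exact (hzero j hj).ge
    rw [hWV] at hμ
    exact mem_spectrum_map_ofReal_mul_self (periodicMatrix_transpose v)
      (periodicMatrix_mem_rowStochastic hv0 hzero (by omega) hsum) hμ

/-- For `w = v ∗ v` the autoconvolution of a symmetric filter `v`
of length `l' ≤ ⌊(n-1)/4⌋` (a symmetric filter of length `l = 2l'`), the numbers
`λ_i^P = w_0 + 2 ∑_{j=1}^{l} w_j cos(2 j (i-1) π/n)` satisfy `λ_1^P = 1` and
`0 ≤ λ_i^P < 1` for `i = 2,…,n`; consequently every eigenvalue of the circulant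
matrix `W^P` built from `w` lies in `[0,1]`. (0-based: `i.val = i - 1`.) -/
theorem stmt_10 (n l' : ℕ) (hn : 2 ≤ n) (v : ℕ → ℝ)
    (hl' : 0 < l') (hl'n : l' ≤ (n - 1) / 4)
    (hpos : ∀ j, j ≤ l' → 0 < v j)
    (hzero : ∀ k, l' < k → v k = 0)
    (hsum : v 0 + 2 * ∑ j ∈ Finset.Icc 1 l', v j = 1)
    (w : ℕ → ℝ)
    (hw : ∀ j : ℕ, w j = ∑' k : ℤ, v k.natAbs * v ((j : ℤ) - k).natAbs)
    (lam : Fin n → ℝ)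
    (hlam : ∀ i : Fin n, lam i = w 0 + 2 * ∑ j ∈ Finset.Icc 1 (2 * l'),
      w j * Real.cos (2 * (j : ℝ) * (i.val : ℝ) * Real.pi / (n : ℝ)))
    (W : Matrix (Fin n) (Fin n) ℝ)
    (hW : ∀ i j : Fin n, W i j =
      w ((i.val : ℤ) - (j.val : ℤ)).natAbs + w (n - ((i.val : ℤ) - (j.val : ℤ)).natAbs)) :
    (∀ i : Fin n, i.val = 0 → lam i = 1) ∧
    (∀ i : Fin n, 1 ≤ i.val → 0 ≤ lam i ∧ lam i < 1) ∧
    (∀ μ : ℂ, μ ∈ spectrum ℂ (W.map (fun x : ℝ => (x : ℂ))) →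
      μ.im = 0 ∧ 0 ≤ μ.re ∧ μ.re ≤ 1) :=
  stmt_10_general n l' v hl' hl'n hpos hzero hsum w hw lam hlam W hW
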